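/- Let (A, [-,-]) be a Lie K-affgebra and o ∈ A. Then the K-module A_o (with a+b = ⟨a,o,b⟩, zero o, α·a = α ▷_o a) together with the bracket [a,b]_o := [a,b] - [a,o] + [o,o] - [o,b] (operations in A_o) is a Lie K-algebra: [-,-]_o is K-bilinear, alternating ([a,a]_o = o), and satisfies the Jacobi identity [a,[b,c]_o]_o + [b,[c,a]_o]_o + [c,[a,b]_o]_o = o. Moreover, for any o, u ∈ A the translation τ_o^u : a ↦ ⟨a,o,u⟩ is an isomorphism of Lie algebras (A_o, [-,-]_o) ≅ (A_u, [-,-]_u). -/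
import Mathlib


universe u v

class AbHeap (H : Type v) where
  hp : H → H → H → H
  hassoc : ∀ a b c d e : H, hp (hp a b c) d e = hp a b (hp c d e)
  hidr : ∀ a b : H, hp a b b = a
  hidl : ∀ a b : H, hp b b a = a
  hcomm : ∀ a b c : H, hp a b c = hp c b a

open AbHeap

class AffMod (K : Type u) [CommRing K] (A : Type v) extends AbHeap A where
  act : K → A → A → A
  act_hp : ∀ (α : K) (a b c d : A),
    act α a (hp b c d) = hp (act α a b) (act α a c) (act α a d)
  act_scalar_hp : ∀ (α β γ : K) (a b : A),
    act (α - β + γ) a b = hp (act α a b) (act β a b) (act γ a b)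
  act_mul : ∀ (α β : K) (a b : A), act (α * β) a b = act α a (act β a b)
  act_base : ∀ (α : K) (a b c : A), act α a b = hp (act α c b) (act α c a) a
  act_zero : ∀ a b : A, act (0 : K) a b = a
  act_one : ∀ a b : A, act (1 : K) a b = b

open AffMod

/-- A homomorphism of affine `K`-modules: a heap homomorphism preserving the action. -/
def IsAffHom (K : Type u) [CommRing K] {A : Type v} {B : Type v} [AffMod K A] [AffMod K B]
    (f : A → B) : Prop :=
  (∀ a b c : A, f (hp a b c) = hp (f a) (f b) (f c)) ∧
  (∀ (α : K) (a b : A), f (act α a b) = act α (f a) (f b))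

/-- A (left) Lie bracket on an affine `K`-module: bi-affine, heap-antisymmetric,
satisfying the heap Jacobi identity. -/
def IsLieBracket (K : Type u) [CommRing K] {A : Type v} [AffMod K A] (br : A → A → A) : Prop :=
  (∀ b : A, IsAffHom K (fun a => br a b)) ∧
  (∀ a : A, IsAffHom K (br a)) ∧
  (∀ a b : A, hp (br a b) (br a a) (br b a) = br b b) ∧
  (∀ a b c : A,
    hp (hp (br a (br b c)) (br a a) (br b (br c a))) (br b b) (br c (br a b)) = br c c)

/-- The retract at `o` of a Lie affgebra bracket:
`[a,b]_o = [a,b] - [a,o] + [o,o] - [o,b]` in `A_o`. -/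
def retrBr {A : Type v} [AbHeap A] (br : A → A → A) (o : A) : A → A → A :=
  fun a b => hp (hp (br a b) (br a o) (br o o)) (br o b) o


/-- The retract abelian group structure at `o`. -/
def heapGroup {A : Type v} [AbHeap A] (o : A) : AddCommGroup A :=
  letI : Add A := ⟨fun a b => hp a o b⟩
  letI : Zero A := ⟨o⟩
  letI : Neg A := ⟨fun a => hp o a o⟩
  letI g : AddGroup A := AddGroup.ofLeftAxioms
    (fun a b c => hassoc a o b o c)
    (fun a => hidl a o)
    (fun a => by show hp (hp o a o) o a = o; rw [hassoc, hidl, hidr])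
  { g with add_comm := fun a b => hcomm a o b }

/-- Retracting a Lie affgebra at `o ∈ A` yields a Lie `K`-algebra structure on `A_o`,
and translations give isomorphisms of the resulting Lie algebras. -/
theorem stmt16 {K : Type u} [CommRing K] {A : Type v} [AffMod K A]
    (br : A → A → A) (hbr : IsLieBracket K br) (o u : A) :
    (∀ a a' b : A, retrBr br o (hp a o a') b = hp (retrBr br o a b) o (retrBr br o a' b)) ∧
    (∀ (α : K) (a b : A), retrBr br o (act α o a) b = act α o (retrBr br o a b)) ∧
    (∀ a b b' : A, retrBr br o a (hp b o b') = hp (retrBr br o a b) o (retrBr br o a b')) ∧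
    (∀ (α : K) (a b : A), retrBr br o a (act α o b) = act α o (retrBr br o a b)) ∧
    (∀ a : A, retrBr br o a a = o) ∧
    (∀ a b c : A,
      hp (hp (retrBr br o a (retrBr br o b c)) o (retrBr br o b (retrBr br o c a))) o
        (retrBr br o c (retrBr br o a b)) = o) ∧
    Function.Bijective (fun a : A => hp a o u) ∧
    (∀ a b : A, hp (hp a o b) o u = hp (hp a o u) u (hp b o u)) ∧
    (∀ (α : K) (a : A), hp (act α o a) o u = act α u (hp a o u)) ∧
    (∀ a b : A, hp (retrBr br o a b) o u = retrBr br u (hp a o u) (hp b o u)) := by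

  obtain ⟨hb1, hb2, hanti, hjac⟩ := hbr
  letI : AddCommGroup A := heapGroup o
  have add_eq : ∀ a b : A, a + b = hp a o b := fun _ _ => rfl
  have neg_eq : ∀ a : A, -a = hp o a o := fun _ => rfl
  have sub_eq : ∀ a b : A, a - b = hp a b o := by
    intro a b
    rw [sub_eq_add_neg, add_eq, neg_eq, ← hassoc, hidr]
  have hp_eq : ∀ a b c : A, hp a b c = a - b + c := by
    intro a b c
    rw [sub_eq]
    show hp a b c = hp (hp a b o) o c
    rw [hassoc, hidl]
  have br1 : ∀ w x y z : A, br (x - y + z) w = br x w - br y w + br z w := by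
    intro w x y z
    have e : br (hp x y z) w = hp (br x w) (br y w) (br z w) := (hb1 w).1 x y z
    rw [← hp_eq x y z, e, hp_eq]
  have br2 : ∀ w x y z : A, br w (x - y + z) = br w x - br w y + br w z := by
    intro w x y z
    have e : br w (hp x y z) = hp (br w x) (br w y) (br w z) := (hb2 w).1 x y z
    rw [← hp_eq x y z, e, hp_eq]
  have actb : ∀ (α : K) (a b : A), act α a b = act α o b - act α o a + a := by
    intro α a b
    rw [act_base α a b o, hp_eq]
  have brs1 : ∀ (α : K) (x w : A),
      br (act α o x) w = act α o (br x w) - act α o (br o w) + br o w := by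
    intro α x w
    have e : br (act α o x) w = act α (br o w) (br x w) := (hb1 w).2 α o x
    rw [e, actb]
  have brs2 : ∀ (α : K) (x w : A),
      br w (act α o x) = act α o (br w x) - act α o (br w o) + br w o := by
    intro α x w
    have e : br w (act α o x) = act α (br w o) (br w x) := (hb2 w).2 α o x
    rw [e, actb]
  have sm_zero : ∀ α : K, act α o o = o := by
    intro α
    rw [act_base α o o o, hidl]
  have sm_add : ∀ (α : K) (x y : A), act α o (x + y) = act α o x + act α o y := by
    intro α x y
    rw [add_eq x y, add_eq (act α o x), act_hp, sm_zero]
  have sm_sub : ∀ (α : K) (x y : A), act α o (x - y) = act α o x - act α o y := by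
    intro α x y
    rw [sub_eq x y, sub_eq (act α o x), act_hp, sm_zero]
  have anti' : ∀ a b : A, br a b - br a a + br b a = br b b := by
    intro a b
    have h := hanti a b
    rw [hp_eq] at h
    exact h
  have jac' : ∀ a b c : A,
      br a (br b c) - br a a + br b (br c a) - br b b + br c (br a b) = br c c := by
    intro a b c
    have h := hjac a b c
    rw [hp_eq, hp_eq] at h
    exact h
  refine ⟨?_, ?_, ?_, ?_, ?_, ?_, ?_, ?_, ?_, ?_⟩
  · intro a a' b
    simp only [retrBr, hp_eq, br1]
    abel
  · intro α a b
    simp only [retrBr, hp_eq, brs1, sm_sub, sm_add, sm_zero]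
    abel
  · intro a b b'
    simp only [retrBr, hp_eq, br2]
    abel
  · intro α a b
    simp only [retrBr, hp_eq, brs2, sm_sub, sm_add, sm_zero]
    abel
  · intro a
    have d := sub_eq_zero_of_eq (anti' a o).symm
    simp only [retrBr, hp_eq]
    apply eq_of_sub_eq_zero
    rw [← d]
    abel
  · intro a b c
    have jd : ∀ x y z : A,
        br x (br y z) - br x x + br y (br z x) - br y y + br z (br x y) - br z z = 0 :=
      fun x y z => sub_eq_zero_of_eq (jac' x y z)
    have comb :
        (br a (br b c) - br a a + br b (br c a) - br b b + br c (br a b) - br c c)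
        - (br a (br b o) - br a a + br b (br o a) - br b b + br o (br a b) - br o o)
        - (br b (br c o) - br b b + br c (br o b) - br c c + br o (br b c) - br o o)
        - (br c (br a o) - br c c + br a (br o c) - br a a + br o (br c a) - br o o)
        + (br a (br o o) - br a a + br o (br o a) - br o o + br o (br a o) - br o o)
        + (br b (br o o) - br b b + br o (br o b) - br o o + br o (br b o) - br o o)
        + (br c (br o o) - br c c + br o (br o c) - br o o + br o (br c o) - br o o)
        - (br o (br o o) - br o o + br o (br o o) - br o o + br o (br o o) - br o o)
        = (0 : A) := by
      rw [jd a b c, jd a b o, jd b c o, jd c a o, jd a o o, jd b o o, jd c o o, jd o o o]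
      abel
    simp only [retrBr, hp_eq, br1, br2]
    apply eq_of_sub_eq_zero
    rw [← comb]
    abel
  · have inv1 : ∀ x : A, hp (hp x o u) u o = x := by
      intro x; rw [hassoc, hidl, hidr]
    have inv2 : ∀ y : A, hp (hp y u o) o u = y := by
      intro y; rw [hassoc, hidl, hidr]
    exact ⟨fun x y h => by
        rw [← inv1 x, ← inv1 y]; exact congrArg (fun z => hp z u o) h,
      fun y => ⟨hp y u o, inv2 y⟩⟩
  · intro a b
    simp only [hp_eq]
    abel
  · intro α a
    have actu : ∀ (α : K) (x : A), act α u x = act α o x - act α o u + u :=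
      fun α x => actb α u x
    simp only [hp_eq, actu, sm_sub, sm_add, sm_zero]
    abel
  · intro a b
    simp only [retrBr, hp_eq, br1, br2]
    abel
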